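/- arXiv:2108.06260 — 4 statements merged into one kernel-verified Lean document; each statement's English description precedes it below -/
import Mathlib

section
/- For all real x and nonnegative integers n, the degenerate Bell polynomial satisfies Bel_{n,λ}(x) = e^{-x} · ∑_{k=0}^{∞} (k)_{n,λ} x^k / k!, where (k)_{n,λ} = k(k-λ)(k-2λ)⋯(k-(n-1)λ) is the degenerate falling factorial. -/
/-!
Expanding `(k)_{n,λ} = ∑_j S_{2,λ}(n,j) (k)_j` reduces the series to the classical identity
`∑_k (k)_j x^k / k! = x^j e^x`: the terms with `k < j` vanish and `(k)_j / k! = 1 / (k-j)!`.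
-/

open Finset

/-- Degenerate falling factorial `(x)_{n,λ} = x(x-λ)⋯(x-(n-1)λ)`. -/
noncomputable def degFall (lam x : ℝ) (n : ℕ) : ℝ := ∏ i ∈ Finset.range n, (x - i * lam)

/-- Ordinary falling factorial `(x)_k = x(x-1)⋯(x-k+1)`. -/
noncomputable def fall (x : ℝ) (k : ℕ) : ℝ := ∏ i ∈ Finset.range k, (x - i)

section FallingFactorialSeries

open Nat

lemma fall_natCast (k j : ℕ) : fall k j = k.descFactorial j := by
  rw [fall, ← descPochhammer_eval_eq_prod_range, descPochhammer_eval_eq_descFactorial]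

lemma fall_natCast_of_lt {k j : ℕ} (h : k < j) : fall k j = 0 := by
  rw [fall_natCast, Nat.descFactorial_of_lt h, Nat.cast_zero]

lemma fall_natCast_mul_pow_div_factorial (x : ℝ) {j k : ℕ} (h : j ≤ k) :
    fall k j * x ^ k / k ! = x ^ j * (x ^ (k - j) / (k - j)!) := by
  have hfac : ((k - j)! : ℝ) * k.descFactorial j = k ! := by
    exact_mod_cast Nat.factorial_mul_descFactorial h
  rw [fall_natCast, ← hfac, ← pow_mul_pow_sub x h]
  have : ((k - j)! : ℝ) ≠ 0 := by positivity
  have : (k.descFactorial j : ℝ) ≠ 0 := by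
    rw [Nat.cast_ne_zero, ne_eq, Nat.descFactorial_eq_zero_iff_lt, not_lt]
    exact h
  field_simp

lemma hasSum_fall_mul_pow_div_factorial (x : ℝ) (j : ℕ) :
    HasSum (fun k : ℕ => fall k j * x ^ k / k !) (x ^ j * Real.exp x) := by
  have hinitial : ∑ k ∈ range j, fall k j * x ^ k / k ! = 0 :=
    sum_eq_zero fun k hk => by rw [fall_natCast_of_lt (mem_range.mp hk), zero_mul, zero_div]
  rw [← hasSum_nat_add_iff' j, hinitial, sub_zero]
  simp_rw [fall_natCast_mul_pow_div_factorial x (Nat.le_add_left j _), Nat.add_sub_cancel,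
    Real.exp_eq_exp_ℝ]
  exact (NormedSpace.expSeries_div_hasSum_exp x).mul_left _

end FallingFactorialSeries

/-- with `Bel_{n,λ}(x) = ∑_{k=0}^n S_{2,λ}(n,k) x^k`, one has
`Bel_{n,λ}(x) = e^{-x} ∑_{k=0}^∞ (k)_{n,λ} x^k / k!`. -/
theorem degenerate_bell_dobinski (lam : ℝ) (S2 : ℕ → ℕ → ℝ)
    (hS2 : ∀ (n : ℕ) (x : ℝ), degFall lam x n = ∑ k ∈ range (n + 1), S2 n k * fall x k)
    (n : ℕ) (x : ℝ) :
    ∑ k ∈ range (n + 1), S2 n k * x ^ k =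
      Real.exp (-x) * ∑' k : ℕ, degFall lam (k : ℝ) n * x ^ k / (Nat.factorial k) := by
  have hterm (k : ℕ) : degFall lam k n * x ^ k / k.factorial =
      ∑ j ∈ range (n + 1), S2 n j * (fall k j * x ^ k / k.factorial) := by
    rw [hS2, sum_mul, sum_div]
    exact sum_congr rfl fun j _ => by ring
  have hsum : HasSum (fun k : ℕ => degFall lam k n * x ^ k / k.factorial)
      ((∑ j ∈ range (n + 1), S2 n j * x ^ j) * Real.exp x) := by
    simp_rw [hterm, sum_mul, mul_assoc]
    exact hasSum_sum fun j _ => (hasSum_fall_mul_pow_div_factorial x j).mul_left (S2 n j)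
  rw [hsum.tsum_eq, mul_comm, mul_assoc, ← Real.exp_add, add_neg_cancel, Real.exp_zero, mul_one]
end

section
/- For every nonnegative integer n and nonzero constant a, the n-th derivative of t ↦ exp(a·e_λ(t)) equals t ↦ (1+λt)^{-n} · Bel_{n,λ}(a·e_λ(t)) · exp(a·e_λ(t)), where e_λ(t) = (1+λt)^{1/λ}. -/
open Finset

/-- Degenerate Bell polynomial `Bel_{n,λ}(x) = e^{-x} ∑_{k≥0} (k)_{n,λ} x^k / k!`. -/
noncomputable def Bel (lam x : ℝ) (n : ℕ) : ℝ :=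
  Real.exp (-x) * ∑' k : ℕ, degFall lam (k : ℝ) n * x ^ k / (Nat.factorial k)

/-- Degenerate exponential `e_λ(t) = (1+λt)^{1/λ}`. -/
noncomputable def degExp (lam t : ℝ) : ℝ := (1 + lam * t) ^ (1 / lam)

/-!
Write `F_n(x) = e^x Bel_{n,λ}(x) = ∑ₖ (k)_{n,λ} x^k / k!`, an entire series since the
coefficients `(k)_{n,λ}` grow only polynomially in `k`. Because
`(k)_{n+1,λ} = (k)_{n,λ} (k - nλ)`, termwise differentiation gives
`F_{n+1}(x) = x F_n'(x) - nλ F_n(x)`, and `F_0 = exp`. Since `e_λ'(t) = e_λ(t) / (1 + λt)`,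
differentiating `(1 + λt)^{-n} F_n(a e_λ(t))` produces exactly
`(1 + λt)^{-(n+1)} F_{n+1}(a e_λ(t))`, so the formula follows by induction on `n`.
-/

open Nat Real

theorem hasDerivAt_tsum_mul_pow {𝕜 : Type*} [RCLike 𝕜] {c : ℕ → 𝕜}
    (hc : ∀ r : ℝ, 0 ≤ r → Summable fun k => ‖c k‖ * k * r ^ k) (x : 𝕜) :
    HasDerivAt (fun y => ∑' k, c k * y ^ k) (∑' k, c k * (k * x ^ (k - 1))) x := by
  have hR : 1 ≤ ‖x‖ + 1 := le_add_of_nonneg_left (norm_nonneg x)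
  refine hasDerivAt_tsum_of_isPreconnected (hc (‖x‖ + 1) (by linarith)) Metric.isOpen_ball
    (convex_ball 0 (‖x‖ + 1)).isPreconnected (fun k y _ => (hasDerivAt_pow k y).const_mul (c k))
    (fun k y hy => ?_) (Metric.mem_ball_self (by linarith)) ?_ (by simp)
  · have hy : ‖y‖ ≤ ‖x‖ + 1 := by simpa using (mem_ball_zero_iff.mp hy).le
    calc ‖c k * (k * y ^ (k - 1))‖ = ‖c k‖ * k * ‖y‖ ^ (k - 1) := by
          simp [mul_assoc]
      _ ≤ ‖c k‖ * k * (‖x‖ + 1) ^ k := by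
          gcongr
          exact (pow_le_pow_left₀ (norm_nonneg y) hy _).trans (pow_le_pow_right₀ hR (k.sub_le 1))
  · exact summable_of_ne_finset_zero (s := {0}) fun k hk => by
      simp [zero_pow (Finset.notMem_singleton.mp hk)]

theorem abs_degFall_le (lam x : ℝ) (n : ℕ) : |degFall lam x n| ≤ (|x| + n * |lam|) ^ n := by
  rw [degFall, Finset.abs_prod]
  calc ∏ i ∈ Finset.range n, |x - i * lam| ≤ ∏ _i ∈ Finset.range n, (|x| + n * |lam|) := by
        gcongr with i hi
        have hin : (i : ℝ) ≤ n := by exact_mod_cast (Finset.mem_range.mp hi).le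
        calc |x - i * lam| ≤ |x| + i * |lam| := by simpa [abs_mul] using abs_sub x (i * lam)
          _ ≤ |x| + n * |lam| := by gcongr
    _ = (|x| + n * |lam|) ^ n := by simp

theorem summable_abs_degFall_div_factorial_mul_pow (lam r : ℝ) (n j : ℕ) :
    Summable fun k : ℕ => |degFall lam k n / k !| * k ^ j * |r| ^ k := by
  set c := n * |lam|
  have hc : 0 ≤ c := by positivity
  refine .of_nonneg_of_le (fun k => by positivity) (fun k => ?_)
    ((summable_pow_div_factorial (exp 1 * |r|)).mul_left ((n + j)! * exp c))
  have hpoly : |degFall lam k n| * k ^ j ≤ (k + c) ^ (n + j) := by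
    rw [pow_add]
    gcongr
    · simpa using abs_degFall_le lam k n
    · exact le_add_of_nonneg_right hc
  have hexp : (k + c) ^ (n + j) ≤ (n + j)! * (exp c * exp 1 ^ k) := by
    have := pow_div_factorial_le_exp _ (add_nonneg k.cast_nonneg hc) (n + j)
    rwa [div_le_iff₀' (by positivity), exp_add, mul_comm (exp _), ← exp_one_pow] at this
  calc |degFall lam k n / k !| * k ^ j * |r| ^ k
      = |degFall lam k n| * k ^ j * |r| ^ k / k ! := by
        rw [abs_div, Nat.abs_cast]; ring
    _ ≤ (n + j)! * (exp c * exp 1 ^ k) * |r| ^ k / k ! := by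
        gcongr ?_ * _ / _
        exact hpoly.trans hexp
    _ = (n + j)! * exp c * ((exp 1 * |r|) ^ k / k !) := by ring

noncomputable def belSeries (lam : ℝ) (n : ℕ) (x : ℝ) : ℝ :=
  ∑' k : ℕ, degFall lam k n / k ! * x ^ k

theorem Bel_mul_exp (lam x : ℝ) (n : ℕ) : Bel lam x n * exp x = belSeries lam n x := by
  rw [Bel, mul_right_comm, ← exp_add, neg_add_cancel, exp_zero, one_mul, belSeries]
  exact tsum_congr fun k => by ring

theorem belSeries_zero (lam : ℝ) : belSeries lam 0 = exp := by
  ext x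
  rw [exp_eq_exp_ℝ, NormedSpace.exp_eq_tsum_div]
  exact tsum_congr fun k => by simp [degFall, inv_mul_eq_div]

theorem hasDerivAt_belSeries (lam : ℝ) (n : ℕ) (x : ℝ) :
    HasDerivAt (belSeries lam n) (∑' k : ℕ, degFall lam k n / k ! * (k * x ^ (k - 1))) x :=
  hasDerivAt_tsum_mul_pow (fun r hr => by
    simpa [abs_div, abs_of_nonneg hr] using summable_abs_degFall_div_factorial_mul_pow lam r n 1) x

theorem belSeries_succ (lam : ℝ) (n : ℕ) (x : ℝ) :
    belSeries lam (n + 1) x = x * deriv (belSeries lam n) x - n * lam * belSeries lam n x := by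
  have hsummable (j : ℕ) : Summable fun k : ℕ => degFall lam k n / k ! * k ^ j * x ^ k :=
    .of_norm <| (summable_abs_degFall_div_factorial_mul_pow lam x n j).congr fun k => by
      simp [abs_div]
  have hderiv :
      x * deriv (belSeries lam n) x = ∑' k : ℕ, degFall lam k n / k ! * k ^ 1 * x ^ k := by
    rw [(hasDerivAt_belSeries lam n x).deriv, ← tsum_mul_left]
    refine tsum_congr fun k => ?_
    rcases k with _ | k
    · simp
    · rw [Nat.add_sub_cancel, pow_succ]; ring
  rw [hderiv, belSeries, belSeries, ← tsum_mul_left, ← (hsummable 1).tsum_sub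
    (by simpa using (hsummable 0).mul_left (n * lam))]
  refine tsum_congr fun k => ?_
  simp only [degFall, Finset.prod_range_succ]
  ring

theorem hasDerivAt_one_add_mul (lam t : ℝ) : HasDerivAt (fun s => 1 + lam * s) lam t := by
  simpa using ((hasDerivAt_id t).const_mul lam).const_add 1

theorem hasDerivAt_degExp {lam t : ℝ} (hlam : lam ≠ 0) (ht : 0 < 1 + lam * t) :
    HasDerivAt (degExp lam) (degExp lam t / (1 + lam * t)) t := by
  refine ((hasDerivAt_one_add_mul lam t).rpow_const (p := 1 / lam) (Or.inl ht.ne')).congr_deriv ?_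
  rw [degExp, rpow_sub_one ht.ne']
  field_simp

theorem hasDerivAt_rpow_neg_mul_belSeries {lam t : ℝ} (hlam : lam ≠ 0) (ht : 0 < 1 + lam * t)
    (a : ℝ) (n : ℕ) :
    HasDerivAt (fun s => (1 + lam * s) ^ (-(n : ℝ)) * belSeries lam n (a * degExp lam s))
      ((1 + lam * t) ^ (-((n + 1 : ℕ) : ℝ)) * belSeries lam (n + 1) (a * degExp lam t)) t := by
  have hpow := (hasDerivAt_one_add_mul lam t).rpow_const (p := -(n : ℝ)) (Or.inl ht.ne')
  have hbel := (hasDerivAt_belSeries lam n (a * degExp lam t)).differentiableAt.hasDerivAt.comp t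
    ((hasDerivAt_degExp hlam ht).const_mul a)
  refine (hpow.mul hbel).congr_deriv ?_
  rw [belSeries_succ, Function.comp_apply, Nat.cast_succ, neg_add', rpow_sub_one ht.ne']
  field_simp
  ring

theorem iteratedDeriv_exp_mul_degExp_eq {lam : ℝ} (hlam : lam ≠ 0) (a : ℝ) (n : ℕ) :
    ∀ t, 0 < 1 + lam * t → iteratedDeriv n (fun s => exp (a * degExp lam s)) t =
      (1 + lam * t) ^ (-(n : ℝ)) * belSeries lam n (a * degExp lam t) := by
  induction n with
  | zero => intro t _; simp [belSeries_zero]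
  | succ n ih =>
    intro t ht
    have hnear : ∀ᶠ s in nhds t, 0 < 1 + lam * s :=
      (isOpen_lt continuous_const (by fun_prop)).mem_nhds ht
    rw [iteratedDeriv_succ, (Filter.eventuallyEq_of_mem hnear ih).deriv_eq]
    exact (hasDerivAt_rpow_neg_mul_belSeries hlam ht a n).deriv

theorem iteratedDeriv_exp_degExp_general (lam a : ℝ) (hlam : lam ≠ 0)
    (n : ℕ) (t : ℝ) (ht : 1 + lam * t > 0) :
    iteratedDeriv n (fun s => Real.exp (a * degExp lam s)) t =
      (1 + lam * t) ^ (-(n : ℝ)) * Bel lam (a * degExp lam t) n *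
        Real.exp (a * degExp lam t) := by
  rw [iteratedDeriv_exp_mul_degExp_eq hlam a n t ht, mul_assoc, Bel_mul_exp]

/-- the n-th derivative of `t ↦ exp(a e_λ(t))`. -/
theorem iteratedDeriv_exp_degExp (lam a : ℝ) (hlam : lam ≠ 0) (ha : a ≠ 0)
    (n : ℕ) (t : ℝ) (ht : 1 + lam * t > 0) :
    iteratedDeriv n (fun s => Real.exp (a * degExp lam s)) t =
      (1 + lam * t) ^ (-(n : ℝ)) * Bel lam (a * degExp lam t) n *
        Real.exp (a * degExp lam t) :=
  iteratedDeriv_exp_degExp_general lam a hlam n t ht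
end

section
/- For nonnegative integers n and k, (1/k!) · ∑_{j=0}^{k} C(k,j) · (−1)^{k−j} · (j)_{n,λ} equals S_{2,λ}(n,k) if n ≥ k, and equals 0 if 0 ≤ n < k. -/
open Finset

/-!
Apply the `k`-th forward difference at `0` to `(x)_{n,λ} = ∑ₘ S_{2,λ}(n,m) (x)_m`.
By Newton's formula `Δᵏ f (0) = ∑ⱼ C(k,j) (-1)^{k-j} f(j)`, and `Δᵏ (x)_m (0) = k! δ_{km}`
since `(x)_m = m! C(x,m)` and `Δ C(x,m) = C(x,m-1)`; so only the coefficient of `(x)_k`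
survives, and it is absent when `n < k`.
-/

lemma fall_natCast_s11 (j m : ℕ) : fall j m = j.descFactorial m := by
  rw [fall, ← descPochhammer_eval_eq_prod_range, descPochhammer_eval_eq_descFactorial]

lemma sum_alternating_choose_mul_choose (k m : ℕ) :
    ∑ j ∈ range (k + 1), (-1 : ℤ) ^ (k - j) * k.choose j * j.choose m =
      if k = m then 1 else 0 := by
  rw [← fwdDiff_iter_choose_zero m k, fwdDiff_iter_eq_sum_shift]
  simp

lemma sum_alternating_choose_mul_fall (k m : ℕ) :
    ∑ j ∈ range (k + 1), (k.choose j : ℝ) * (-1) ^ (k - j) * fall j m =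
      if k = m then (k.factorial : ℝ) else 0 := by
  have h := congrArg (fun z : ℤ => (m.factorial : ℝ) * z) (sum_alternating_choose_mul_choose k m)
  simp only [Int.cast_sum, Int.cast_mul, Int.cast_pow, Int.cast_neg, Int.cast_one,
    Int.cast_natCast, Finset.mul_sum] at h
  simp_rw [fall_natCast_s11, Nat.descFactorial_eq_factorial_mul_choose, Nat.cast_mul]
  split_ifs at h ⊢ with hkm <;> simpa [hkm, mul_comm, mul_left_comm, mul_assoc] using h

lemma sum_alternating_choose_mul_sum_fall (c : ℕ → ℝ) (n k : ℕ) :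
    ∑ j ∈ range (k + 1), (k.choose j : ℝ) * (-1) ^ (k - j) *
        ∑ m ∈ range (n + 1), c m * fall j m =
      if k ≤ n then k.factorial * c k else 0 := by
  calc _ = ∑ m ∈ range (n + 1), c m *
          ∑ j ∈ range (k + 1), (k.choose j : ℝ) * (-1) ^ (k - j) * fall j m := by
        simp_rw [Finset.mul_sum]
        rw [Finset.sum_comm]
        refine Finset.sum_congr rfl fun m _ => Finset.sum_congr rfl fun j _ => by ring
    _ = _ := by
        simp_rw [sum_alternating_choose_mul_fall, mul_ite, mul_zero, eq_comm (a := k),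
          Finset.sum_ite_eq', mem_range, Nat.lt_succ_iff, mul_comm]

/-- explicit formula for the degenerate Stirling numbers of the second kind. -/
theorem degenerate_stirling_second_formula (lam : ℝ) (S2 : ℕ → ℕ → ℝ)
    (hS2 : ∀ (n : ℕ) (x : ℝ), degFall lam x n = ∑ k ∈ range (n + 1), S2 n k * fall x k)
    (n k : ℕ) :
    (k ≤ n →
      (1 / (Nat.factorial k : ℝ)) *
        ∑ j ∈ range (k + 1), (k.choose j : ℝ) * (-1) ^ (k - j) * degFall lam (j : ℝ) n =
        S2 n k) ∧
    (n < k →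
      (1 / (Nat.factorial k : ℝ)) *
        ∑ j ∈ range (k + 1), (k.choose j : ℝ) * (-1) ^ (k - j) * degFall lam (j : ℝ) n =
        0) := by
  simp_rw [hS2 n, sum_alternating_choose_mul_sum_fall]
  refine ⟨fun hkn => ?_, fun hnk => ?_⟩
  · rw [if_pos hkn, ← mul_assoc, one_div_mul_cancel (by positivity), one_mul]
  · rw [if_neg (by omega), mul_zero]
end

section
/- The degenerate Stirling numbers of the second kind satisfy the recurrence S_{2,λ}(n+1,k) = S_{2,λ}(n,k−1) + (k − nλ)·S_{2,λ}(n,k) for 0 ≤ k ≤ n+1 (with the convention S_{2,λ}(n,−1) = 0 and S_{2,λ}(n,j) = 0 for j > n). -/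
/-!
Multiplying the expansion `(x)_{n,λ} = ∑ S_{2,λ}(n,k) (x)_k` by `x - nλ = (x - k) + (k - nλ)` and
using `(x)_k (x - k) = (x)_{k+1}` expands `(x)_{n+1,λ}` in falling factorials with the coefficients
on the right of the recurrence. The falling factorials are linearly independent (`(m)_k` vanishes
for `m < k` and is nonzero for `m = k`), so these coefficients are `S_{2,λ}(n+1,k)`.
-/

open Finset

lemma fall_succ (x : ℝ) (k : ℕ) : fall x (k + 1) = fall x k * (x - k) :=
  prod_range_succ _ _

lemma degFall_succ (lam x : ℝ) (n : ℕ) : degFall lam x (n + 1) = degFall lam x n * (x - n * lam) :=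
  prod_range_succ _ _

lemma fall_natCast_s13 (m k : ℕ) : fall m k = m.descFactorial k := by
  rw [fall, ← descPochhammer_eval_eq_prod_range, descPochhammer_eval_eq_descFactorial]

lemma eq_zero_of_sum_mul_fall_eq_zero {N : ℕ} {c : ℕ → ℝ}
    (h : ∀ x, ∑ j ∈ range N, c j * fall x j = 0) : ∀ k < N, c k = 0 := by
  intro k
  induction k using Nat.strong_induction_on with
  | _ k ih =>
    intro hk
    have hsum : ∑ j ∈ range N, c j * fall k j = c k * k.factorial := by
      rw [sum_eq_single_of_mem k (mem_range.2 hk), fall_natCast_s13, Nat.descFactorial_self]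
      intro j hjN hjk
      rcases lt_or_gt_of_ne hjk with hj | hj
      · rw [ih j hj (hj.trans hk), zero_mul]
      · rw [fall_natCast_s13, Nat.descFactorial_eq_zero_iff_lt.2 hj, Nat.cast_zero, mul_zero]
    have := h k
    rw [hsum] at this
    exact (mul_eq_zero.1 this).resolve_right (Nat.cast_ne_zero.2 k.factorial_ne_zero)

lemma eq_of_sum_mul_fall_eq {N : ℕ} {c d : ℕ → ℝ} (hc : ∀ k, N ≤ k → c k = 0)
    (hd : ∀ k, N ≤ k → d k = 0)
    (h : ∀ x, ∑ j ∈ range N, c j * fall x j = ∑ j ∈ range N, d j * fall x j) : c = d := by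
  have hdiff := eq_zero_of_sum_mul_fall_eq_zero (N := N) (c := c - d) fun x => by
    simp only [Pi.sub_apply, sub_mul, sum_sub_distrib, h, sub_self]
  funext k
  rcases lt_or_ge k N with hk | hk
  · exact sub_eq_zero.1 (hdiff k hk)
  · rw [hc k hk, hd k hk]

lemma sum_mul_fall_mul_sub (a x : ℝ) {N : ℕ} {c : ℕ → ℝ} (hN : c N = 0) :
    (∑ j ∈ range N, c j * fall x j) * (x - a) =
      ∑ j ∈ range (N + 1), ((if j = 0 then 0 else c (j - 1)) + (j - a) * c j) * fall x j := by
  calc (∑ j ∈ range N, c j * fall x j) * (x - a)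
      = ∑ j ∈ range N, c j * fall x (j + 1) + ∑ j ∈ range N, (j - a) * c j * fall x j := by
        rw [sum_mul, ← sum_add_distrib]
        refine sum_congr rfl fun j _ => ?_
        rw [fall_succ]
        ring
    _ = ∑ j ∈ range (N + 1), (if j = 0 then 0 else c (j - 1)) * fall x j
          + ∑ j ∈ range (N + 1), (j - a) * c j * fall x j := by
        rw [sum_range_succ' _ N, sum_range_succ _ N, hN]
        simp
    _ = _ := by
        rw [← sum_add_distrib]
        exact sum_congr rfl fun j _ => by ring

theorem degenerate_stirling_second_recurrence_general (lam : ℝ) (S2 : ℕ → ℕ → ℝ)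
    (hS2 : ∀ (n : ℕ) (x : ℝ), degFall lam x n = ∑ k ∈ range (n + 1), S2 n k * fall x k)
    (hzero : ∀ n k : ℕ, n < k → S2 n k = 0)
    (n : ℕ) (k : ℕ) :
    S2 (n + 1) k =
      (if k = 0 then 0 else S2 n (k - 1)) + ((k : ℝ) - n * lam) * S2 n k := by
  refine congrFun (eq_of_sum_mul_fall_eq (N := n + 2) (c := S2 (n + 1))
    (d := fun j => (if j = 0 then 0 else S2 n (j - 1)) + ((j : ℝ) - n * lam) * S2 n j)
    ?_ ?_ ?_) k
  · exact fun j hj => hzero (n + 1) j (by omega)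
  · intro j hj
    rw [if_neg (by omega), hzero n (j - 1) (by omega), hzero n j (by omega)]
    ring
  · intro x
    rw [← hS2, degFall_succ, hS2, sum_mul_fall_mul_sub _ _ (hzero n (n + 1) n.lt_succ_self)]

/-- the recurrence `S_{2,λ}(n+1,k) = S_{2,λ}(n,k−1) + (k − nλ) S_{2,λ}(n,k)`
for `0 ≤ k ≤ n+1`, with the conventions `S_{2,λ}(n,−1) = 0` and `S_{2,λ}(n,j) = 0` for `j > n`. -/
theorem degenerate_stirling_second_recurrence (lam : ℝ) (S2 : ℕ → ℕ → ℝ)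
    (hS2 : ∀ (n : ℕ) (x : ℝ), degFall lam x n = ∑ k ∈ range (n + 1), S2 n k * fall x k)
    (hzero : ∀ n k : ℕ, n < k → S2 n k = 0)
    (n : ℕ) (k : ℕ) (hk : k ≤ n + 1) :
    S2 (n + 1) k =
      (if k = 0 then 0 else S2 n (k - 1)) + ((k : ℝ) - n * lam) * S2 n k :=
  degenerate_stirling_second_recurrence_general lam S2 hS2 hzero n k
end
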